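/- arXiv:2009.07812 — 4 statements merged into one kernel-verified Lean document; each statement's English description precedes it below -/
import Mathlib

section
/- Suppose the ROTPB(μ,ν) problem with 0 < α < 1 has a nonzero solution T* ∈ Path(μ*, ν*). Then there exists no real number σ > 1 such that σμ* ≤ μ and σν* ≤ ν. -/
open MeasureTheory

/-- if the ROTPB(μ,ν) problem with `0 < α < 1` has a nonzero solution
with boundary data `(μ*, ν*)` (i.e. `(μ*,ν*)` minimizes
`E(μ̃,ν̃) = d_α(μ̃,ν̃) − ∫h dν̃ + ∫h dμ̃` among feasible pairs of equal mass, and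
`d_α(μ*,ν*) > 0`), then there is no `σ > 1` with `σμ* ≤ μ` and `σν* ≤ ν`.
The scaling law `d_α(λσ,λτ) = λ^α d_α(σ,τ)` is assumed. -/
theorem stmt6 {X : Type*} [MeasurableSpace X]
    (α : ℝ) (hα0 : 0 < α) (hα1 : α < 1)
    (dα : Measure X → Measure X → ℝ) (h : X → ℝ)
    (hscale : ∀ (l : NNReal) (σ τ : Measure X), dα (l • σ) (l • τ) = (l : ℝ) ^ α * dα σ τ)
    (hint_scale : ∀ (l : NNReal) (τ : Measure X), ∫ x, h x ∂(l • τ) = (l : ℝ) * ∫ x, h x ∂τ)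
    (μ ν μs νs : Measure X) (hμs : μs ≤ μ) (hνs : νs ≤ ν)
    (hmass : μs Set.univ = νs Set.univ)
    (hpos : 0 < dα μs νs)
    (hmin : ∀ μt νt : Measure X, μt ≤ μ → νt ≤ ν → μt Set.univ = νt Set.univ →
      dα μs νs - ∫ x, h x ∂νs + ∫ x, h x ∂μs ≤ dα μt νt - ∫ x, h x ∂νt + ∫ x, h x ∂μt) :
    ¬ ∃ σ : NNReal, 1 < σ ∧ σ • μs ≤ μ ∧ σ • νs ≤ ν := by
  rintro ⟨σ, hσ1, hμσ, hνσ⟩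
  set D := dα μs νs with hD
  set C := (∫ x, h x ∂μs) - ∫ x, h x ∂νs with hC
  -- take the zero pair
  have h0 : D - ∫ x, h x ∂νs + ∫ x, h x ∂μs ≤ 0 := by
    have := hmin ((0 : NNReal) • μs) ((0 : NNReal) • νs)
      (by simp [Measure.zero_le]) (by simp [Measure.zero_le]) (by simp)
    rw [hscale, hint_scale, hint_scale] at this
    simpa [Real.zero_rpow (ne_of_gt hα0)] using this
  -- take the σ-scaled pair
  have h2 : D - ∫ x, h x ∂νs + ∫ x, h x ∂μs ≤
      (σ : ℝ) ^ α * D - (σ : ℝ) * ∫ x, h x ∂νs + (σ : ℝ) * ∫ x, h x ∂μs := by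
    have := hmin (σ • μs) (σ • νs) hμσ hνσ (by simp [Measure.smul_apply, hmass])
    rwa [hscale, hint_scale, hint_scale] at this
  have hs1 : (1 : ℝ) < (σ : ℝ) := by exact_mod_cast hσ1
  have hlt : (σ : ℝ) ^ α < (σ : ℝ) := by
    have := Real.rpow_lt_rpow_of_exponent_lt hs1 hα1
    simpa using this
  nlinarith [h0, h2, hpos, hlt, hs1]
end

section
/- Suppose ‖μ‖ = ‖ν‖, c > 0, 1 − 1/m < α < 1, and T*_c ∈ Path(μ*_c, ν*_c) minimizes E_c(T) = M_α(T) − c·M(∂T) over {T : ∂T ⪯ ν − μ}. Then ‖μ − μ*_c‖ = ‖ν − ν*_c‖ ≤ (C·diam(X)/(2c))^(1/(1−α)), where C = C_{m,α} = √m / (2(2^{1−m(1−α)} − 1)). -/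
open MeasureTheory

/-- with `‖μ‖ = ‖ν‖`, `c > 0`, `1 − 1/m < α < 1`, and `T*_c ∈ Path(μ*_c, ν*_c)`
minimizing `E_c(T) = M_α(T) − c·M(∂T)` over `{T : ∂T ⪯ ν − μ}`, one has
`‖μ − μ*_c‖ = ‖ν − ν*_c‖ ≤ (C_{m,α}·diam(X)/(2c))^(1/(1−α))`, where
`C_{m,α} = √m / (2(2^{1−m(1−α)} − 1))`. Currents are abstracted with additive
boundary parts `bp, bm` and subadditive `Mα`; the external estimate
`d_α(σ,τ) ≤ C_{m,α}·diam(X)·‖σ‖^α` is encoded by the existence of a transport path `Tt`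
from `μ − μ*_c` to `ν − ν*_c` of `Mα`-cost at most `C_{m,α}·diam(X)·‖μ − μ*_c‖^α`. -/
theorem stmt11 (m : ℕ) {X : Type*} [MeasurableSpace X]
    (K : Set X) (diamX : ℝ) (hdiam : 0 ≤ diamX)
    (Cur : Type*) [Add Cur] (Mα : Cur → ℝ) (bp bm : Cur → Measure X)
    (hMα_sub : ∀ S T : Cur, Mα (S + T) ≤ Mα S + Mα T)
    (hbp_add : ∀ S T : Cur, bp (S + T) = bp S + bp T)
    (hbm_add : ∀ S T : Cur, bm (S + T) = bm S + bm T)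
    (α c : ℝ) (hα0 : 1 - 1 / (m : ℝ) < α) (hα1 : α < 1) (hc : 0 < c)
    (μ ν μs νs : Measure X) [IsFiniteMeasure μ] [IsFiniteMeasure ν]
    (hmass : μ Set.univ = ν Set.univ)
    (hμs : μs ≤ μ) (hνs : νs ≤ ν) (hmass' : μs Set.univ = νs Set.univ)
    (Tc : Cur) (hbpTc : bp Tc = νs) (hbmTc : bm Tc = μs)
    (hmin : ∀ T : Cur, bp T ≤ ν → bm T ≤ μ →
      Mα Tc - c * (((bp Tc) Set.univ).toReal + ((bm Tc) Set.univ).toReal) ≤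
        Mα T - c * (((bp T) Set.univ).toReal + ((bm T) Set.univ).toReal))
    (hEst : ∃ Tt : Cur, bp Tt = ν - νs ∧ bm Tt = μ - μs ∧
      Mα Tt ≤ (Real.sqrt m / (2 * ((2 : ℝ) ^ (1 - (m : ℝ) * (1 - α)) - 1))) * diamX *
        ((μ - μs) Set.univ).toReal ^ α) :
    ((μ - μs) Set.univ).toReal = ((ν - νs) Set.univ).toReal ∧
      ((μ - μs) Set.univ).toReal ≤
        ((Real.sqrt m / (2 * ((2 : ℝ) ^ (1 - (m : ℝ) * (1 - α)) - 1))) * diamX / (2 * c)) ^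
          (1 / (1 - α)) := by
  -- m ≥ 1
  have hm : 1 ≤ m := by
    by_contra h
    push_neg at h
    interval_cases m
    simp at hα0
    linarith
  have hmR : (1 : ℝ) ≤ (m : ℝ) := by exact_mod_cast hm
  set C : ℝ := Real.sqrt m / (2 * ((2 : ℝ) ^ (1 - (m : ℝ) * (1 - α)) - 1)) with hC
  have hC0 : 0 < C := by
    have hmpos : (0 : ℝ) < m := by linarith
    have hinv : (m : ℝ) * (1 / m) = 1 := by field_simp
    have h1 : (m : ℝ) * (1 - α) < 1 := by
      nlinarith [mul_lt_mul_of_pos_left hα0 hmpos]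
    have h2 : (1 : ℝ) < (2 : ℝ) ^ (1 - (m : ℝ) * (1 - α)) :=
      (Real.one_lt_rpow_iff_of_pos (by norm_num : (0:ℝ) < 2)).mpr (Or.inl ⟨by norm_num, by linarith⟩)
    apply div_pos (Real.sqrt_pos.mpr hmpos)
    linarith
  -- mass equalities
  have hμsfin : μs Set.univ < ⊤ := lt_of_le_of_lt (hμs Set.univ) (measure_lt_top μ _)
  have hνsfin : νs Set.univ < ⊤ := lt_of_le_of_lt (hνs Set.univ) (measure_lt_top ν _)
  haveI : IsFiniteMeasure μs := ⟨hμsfin⟩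
  haveI : IsFiniteMeasure νs := ⟨hνsfin⟩
  have hsubμ : (μ - μs) Set.univ = μ Set.univ - μs Set.univ :=
    Measure.sub_apply MeasurableSet.univ hμs
  have hsubν : (ν - νs) Set.univ = ν Set.univ - νs Set.univ :=
    Measure.sub_apply MeasurableSet.univ hνs
  have heq : ((μ - μs) Set.univ).toReal = ((ν - νs) Set.univ).toReal := by
    rw [hsubμ, hsubν, hmass, hmass']
  refine ⟨heq, ?_⟩
  set s : ℝ := ((μ - μs) Set.univ).toReal with hs
  have hs0 : 0 ≤ s := ENNReal.toReal_nonneg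
  -- key estimate: 2 c s ≤ C * diamX * s^α
  obtain ⟨Tt, hbpTt, hbmTt, hMαTt⟩ := hEst
  have hbpT : bp (Tc + Tt) = ν := by
    rw [hbp_add, hbpTc, hbpTt]
    rw [add_comm]
    exact Measure.sub_add_cancel_of_le hνs
  have hbmT : bm (Tc + Tt) = μ := by
    rw [hbm_add, hbmTc, hbmTt]
    rw [add_comm]
    exact Measure.sub_add_cancel_of_le hμs
  have hmin' := hmin (Tc + Tt) (le_of_eq hbpT) (le_of_eq hbmT)
  rw [hbpT, hbmT, hbpTc, hbmTc] at hmin'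
  have hMαT := hMα_sub Tc Tt
  -- toReal arithmetic
  have hμtoReal : s = (μ Set.univ).toReal - (μs Set.univ).toReal := by
    rw [hs, hsubμ, ENNReal.toReal_sub_of_le (hμs Set.univ) (measure_ne_top μ _)]
  have hνtoReal : ((ν - νs) Set.univ).toReal
      = (ν Set.univ).toReal - (νs Set.univ).toReal := by
    rw [hsubν, ENNReal.toReal_sub_of_le (hνs Set.univ) (measure_ne_top ν _)]
  have hkey : 2 * c * s ≤ C * diamX * s ^ α := by
    have h1 : c * ((ν Set.univ).toReal + (μ Set.univ).toReal)
        - c * ((νs Set.univ).toReal + (μs Set.univ).toReal) ≤ Mα Tt := by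
      linarith
    have h2 : (ν Set.univ).toReal - (νs Set.univ).toReal = s := by
      rw [← hνtoReal, ← heq]
    have h3 : (μ Set.univ).toReal - (μs Set.univ).toReal = s := hμtoReal.symm
    calc 2 * c * s = c * ((ν Set.univ).toReal + (μ Set.univ).toReal)
        - c * ((νs Set.univ).toReal + (μs Set.univ).toReal) := by ring_nf; nlinarith
      _ ≤ Mα Tt := h1
      _ ≤ C * diamX * s ^ α := hMαTt
  -- conclude
  rcases eq_or_lt_of_le hs0 with h | h
  · rw [← h]
    apply Real.rpow_nonneg
    positivity
  · have hsa : 0 < s ^ α := Real.rpow_pos_of_pos h α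
    have h1α : 0 < 1 - α := by linarith
    have hsplit : s = s ^ α * s ^ (1 - α) := by
      rw [← Real.rpow_add h]; norm_num
    have hpow : s ^ (1 - α) ≤ C * diamX / (2 * c) := by
      rw [le_div_iff₀ (by positivity)]
      have h2 : (s ^ (1 - α) * (2 * c)) * s ^ α ≤ (C * diamX) * s ^ α := by
        calc (s ^ (1 - α) * (2 * c)) * s ^ α = 2 * c * (s ^ α * s ^ (1 - α)) := by ring
          _ = 2 * c * s := by rw [← hsplit]
          _ ≤ C * diamX * s ^ α := hkey
      exact le_of_mul_le_mul_right h2 hsa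
    calc s = (s ^ (1 - α)) ^ (1 / (1 - α)) := by
          rw [← Real.rpow_mul hs0, mul_one_div, div_self h1α.ne', Real.rpow_one]
      _ ≤ (C * diamX / (2 * c)) ^ (1 / (1 - α)) :=
          Real.rpow_le_rpow (by positivity) hpow (by positivity)
end

section
/- Let μ = Σᵢ aᵢ δ_{xᵢ} and ν = Σⱼ bⱼ δ_{yⱼ} be finite atomic measures with min_i aᵢ ≥ Σⱼ bⱼ. If T* ∈ Path(μ*, ν*) is a ROTPB(μ,ν) solution (0 < α < 1) and K is a connected component of spt(T*) containing two distinct source points x₁, x₂, then both x₁ and x₂ lie in the exception set P = {x_i : μ*({x_i}) < μ({x_i})} ∪ {y_j : ν*({y_j}) < ν({y_j})}. Combined with the fact that each connected component of spt(T*) contains at most one element of P, each connected component of spt(T*) contains exactly one source point. -/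
open MeasureTheory

lemma MeasureTheory.Measure.measure_singleton_lt_measure_univ {X : Type*} [MeasurableSpace X]
    [MeasurableSingletonClass X] {μ : Measure X} {p q : X} (hpq : p ≠ q) (hp : μ {p} ≠ ⊤)
    (hq : 0 < μ {q}) : μ {p} < μ Set.univ :=
  calc μ {p} < μ {p} + μ {q} := ENNReal.lt_add_right hp hq.ne'
    _ = μ {p, q} := (measure_union (Set.disjoint_singleton.mpr hpq) (measurableSet_singleton q)).symm
    _ ≤ μ Set.univ := measure_mono (Set.subset_univ _)

lemma MeasureTheory.Measure.le_finset_sum_smul_dirac_apply_singleton {X ι : Type*}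
    [MeasurableSpace X] {s : Finset ι} {x : ι → X} (a : ι → ENNReal) {i : ι} (hi : i ∈ s) :
    a i ≤ (∑ k ∈ s, a k • Measure.dirac (x k)) {x i} := by
  rw [Measure.finsetSum_apply]
  calc a i = (a i • Measure.dirac (x i)) {x i} := by simp
    _ ≤ ∑ k ∈ s, (a k • Measure.dirac (x k)) {x i} :=
        Finset.single_le_sum (f := fun k => (a k • Measure.dirac (x k)) {x i}) (fun _ _ => zero_le) hi

theorem stmt15_general {X : Type*} [MeasurableSpace X] [MeasurableSingletonClass X]
    {ι κ : Type*} (s : Finset ι) (t : Finset κ)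
    (x : ι → X) (y : κ → X) (a : ι → ENNReal) (b : κ → ENNReal)
    (μ ν μs νs : Measure X) [IsFiniteMeasure μ]
    (hμ : μ = ∑ i ∈ s, a i • Measure.dirac (x i))
    (hν : ν = ∑ j ∈ t, b j • Measure.dirac (y j))
    (hbig : ∀ i ∈ s, ∑ j ∈ t, b j ≤ a i)
    (hμs : μs ≤ μ) (hνs : νs ≤ ν) (hmass : μs Set.univ = νs Set.univ)
    (K P : Set X)
    (hP : P = {p | μs {p} < μ {p}} ∪ {p | νs {p} < ν {p}})
    (hAtMostOne : ∀ p ∈ P ∩ K, ∀ q ∈ P ∩ K, p = q)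
    (i1 i2 : ι) (hi1 : i1 ∈ s) (hi2 : i2 ∈ s)
    (hx1K : x i1 ∈ K) (hx2K : x i2 ∈ K) (hne : x i1 ≠ x i2)
    (hpos1 : 0 < μs {x i1}) (hpos2 : 0 < μs {x i2}) :
    x i1 ∈ P ∧ x i2 ∈ P ∧ x i1 = x i2 := by
  have hν_univ : ν Set.univ = ∑ j ∈ t, b j := by simp [hν]
  have mem_P : ∀ i ∈ s, ∀ i', x i ≠ x i' → 0 < μs {x i'} → x i ∈ P := by
    intro i hi i' hii' hpos
    have hfin : μs {x i} ≠ ⊤ := ne_top_of_le_ne_top (measure_ne_top μ _) (hμs _)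
    rw [hP]
    left
    calc μs {x i} < μs Set.univ := Measure.measure_singleton_lt_measure_univ hii' hfin hpos
      _ = νs Set.univ := hmass
      _ ≤ ν Set.univ := hνs _
      _ = ∑ j ∈ t, b j := hν_univ
      _ ≤ a i := hbig i hi
      _ ≤ μ {x i} := hμ ▸ Measure.le_finset_sum_smul_dirac_apply_singleton a hi
  have hP1 := mem_P i1 hi1 i2 hne hpos2
  have hP2 := mem_P i2 hi2 i1 hne.symm hpos1
  exact ⟨hP1, hP2, hAtMostOne _ ⟨hP1, hx1K⟩ _ ⟨hP2, hx2K⟩⟩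

/-- `μ = Σᵢ aᵢ δ_{xᵢ}`, `ν = Σⱼ bⱼ δ_{yⱼ}` finite atomic with
`min aᵢ ≥ Σ bⱼ`; `T* ∈ Path(μ*,ν*)` a ROTPB solution; `K` a connected component of
`spt T*` containing two source points `x_{i1}, x_{i2}` with positive `μ*`-mass. Then both
lie in the exception set `P = {x : μ*{x} < μ{x}} ∪ {y : ν*{y} < ν{y}}`; combined with
the at-most-one-exception property of `K`, they must coincide (so each connected
component contains exactly one source point). -/
theorem stmt15 {X : Type*} [MeasurableSpace X] [MeasurableSingletonClass X]
    {ι κ : Type*} (s : Finset ι) (t : Finset κ)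
    (x : ι → X) (y : κ → X) (a : ι → ENNReal) (b : κ → ENNReal)
    (μ ν μs νs : Measure X) [IsFiniteMeasure μ] [IsFiniteMeasure ν]
    (hμ : μ = ∑ i ∈ s, a i • Measure.dirac (x i))
    (hν : ν = ∑ j ∈ t, b j • Measure.dirac (y j))
    (hxinj : Set.InjOn x s)
    (hbig : ∀ i ∈ s, ∑ j ∈ t, b j ≤ a i)
    (hμs : μs ≤ μ) (hνs : νs ≤ ν) (hmass : μs Set.univ = νs Set.univ)
    (K P : Set X)
    (hP : P = {p | μs {p} < μ {p}} ∪ {p | νs {p} < ν {p}})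
    (hAtMostOne : ∀ p ∈ P ∩ K, ∀ q ∈ P ∩ K, p = q)
    (i1 i2 : ι) (hi1 : i1 ∈ s) (hi2 : i2 ∈ s)
    (hx1K : x i1 ∈ K) (hx2K : x i2 ∈ K) (hne : x i1 ≠ x i2)
    (hpos1 : 0 < μs {x i1}) (hpos2 : 0 < μs {x i2}) :
    x i1 ∈ P ∧ x i2 ∈ P ∧ x i1 = x i2 :=
  stmt15_general s t x y a b μ ν μs νs hμ hν hbig hμs hνs hmass K P hP hAtMostOne i1 i2 hi1 hi2 hx1K
    hx2K hne hpos1 hpos2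
end

section
/- Let 0 ≤ α < 1 and let {T_i} be a minimizing sequence for E(T) = M_α(T) − ∫_X h d(∂T) over rectifiable 1-currents with ∂T_i ⪯ ν − μ, where h is continuous on the compact set spt(ν − μ) and μ, ν are finite. Then sup_i M_α(T_i) ≤ ∫_X |h| d|ν − μ| < ∞, and if each T_i is additionally an α-optimal transport path for its own boundary, then sup_i M(T_i) ≤ (½(‖μ‖+‖ν‖))^{1−α} · ∫_X |h| d|ν − μ| < ∞. -/
open MeasureTheory

/-- for a minimizing sequence `{Tᵢ}` of
`E(T) = M_α(T) − ∫ h d(∂T)` over `{T : ∂T ⪯ ν − μ}` (so `E(Tᵢ) ≤ E(0) = 0`), with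
`h` integrable (continuous on the compact `spt(ν−μ)`), `μ ⊥ ν` finite:
`sup_i M_α(Tᵢ) ≤ ∫ |h| d|ν − μ| < ∞`; and if each `Tᵢ` is an α-optimal transport path
for its own boundary (so the mass bound lemma `M(S) ≤ (M(∂S)/2)^{1−α} M_α(S)` applies),
then `sup_i M(Tᵢ) ≤ (½(‖μ‖+‖ν‖))^{1−α} ∫ |h| d|ν − μ|`. Here `bp T, bm T` are the
positive/negative parts of `∂T` and `|ν − μ|` is the total variation measure. -/
theorem stmt19 {X : Type*} [MeasurableSpace X]
    (Cur : Type*) (Mα Mtot : Cur → ℝ) (bp bm : Cur → Measure X)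
    (Optimal : Cur → Prop)
    (α : ℝ) (hα0 : 0 ≤ α) (hα1 : α < 1)
    (μ ν : Measure X) [IsFiniteMeasure μ] [IsFiniteMeasure ν]
    (hsing : μ.MutuallySingular ν)
    (h : X → ℝ) (hmeas : Measurable h) (hintμ : Integrable h μ) (hintν : Integrable h ν)
    (hMα_nonneg : ∀ S : Cur, 0 ≤ Mα S)
    (hLemma : ∀ S : Cur, Optimal S →
      Mtot S ≤ ((((bp S) Set.univ).toReal + ((bm S) Set.univ).toReal) / 2) ^ (1 - α) * Mα S)
    (T : ℕ → Cur)
    (hfeas : ∀ i, bp (T i) ≤ ν ∧ bm (T i) ≤ μ)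
    (hE : ∀ i, Mα (T i) - (∫ x, h x ∂(bp (T i)) - ∫ x, h x ∂(bm (T i))) ≤ 0) :
    (∀ i, Mα (T i) ≤
        ∫ x, |h x| ∂((ν.toSignedMeasure - μ.toSignedMeasure).totalVariation)) ∧
      ((∀ i, Optimal (T i)) → ∀ i, Mtot (T i) ≤
        (((μ Set.univ).toReal + (ν Set.univ).toReal) / 2) ^ (1 - α) *
          ∫ x, |h x| ∂((ν.toSignedMeasure - μ.toSignedMeasure).totalVariation)) := by
  -- Jordan decomposition of ν - μ is ⟨ν, μ⟩
  set j : JordanDecomposition X := ⟨ν, μ, hsing.symm⟩ with hj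
  have hTV : (ν.toSignedMeasure - μ.toSignedMeasure).totalVariation = ν + μ := by
    have : (ν.toSignedMeasure - μ.toSignedMeasure).toJordanDecomposition = j :=
      SignedMeasure.toJordanDecomposition_eq rfl
    rw [SignedMeasure.totalVariation, this]
  have habsμ : Integrable (fun x => |h x|) μ := hintμ.abs
  have habsν : Integrable (fun x => |h x|) ν := hintν.abs
  have hInt : ∫ x, |h x| ∂((ν.toSignedMeasure - μ.toSignedMeasure).totalVariation)
      = (∫ x, |h x| ∂ν) + ∫ x, |h x| ∂μ := by
    rw [hTV, integral_add_measure habsν habsμ]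
  -- per-i bound on Mα
  have key : ∀ i, Mα (T i) ≤
      ∫ x, |h x| ∂((ν.toSignedMeasure - μ.toSignedMeasure).totalVariation) := by
    intro i
    obtain ⟨hbp, hbm⟩ := hfeas i
    have hintp : Integrable h (bp (T i)) := hintν.mono_measure hbp
    have hintm : Integrable h (bm (T i)) := hintμ.mono_measure hbm
    have h1 : ∫ x, h x ∂(bp (T i)) ≤ ∫ x, |h x| ∂ν := by
      calc ∫ x, h x ∂(bp (T i)) ≤ ∫ x, |h x| ∂(bp (T i)) :=
            integral_mono hintp hintp.abs (fun x => le_abs_self _)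
        _ ≤ ∫ x, |h x| ∂ν :=
            integral_mono_measure hbp (Filter.Eventually.of_forall fun x => abs_nonneg _) habsν
    have h2 : -∫ x, h x ∂(bm (T i)) ≤ ∫ x, |h x| ∂μ := by
      calc -∫ x, h x ∂(bm (T i)) = ∫ x, -h x ∂(bm (T i)) := (integral_neg _).symm
        _ ≤ ∫ x, |h x| ∂(bm (T i)) :=
            integral_mono hintm.neg hintm.abs (fun x => neg_le_abs _)
        _ ≤ ∫ x, |h x| ∂μ :=
            integral_mono_measure hbm (Filter.Eventually.of_forall fun x => abs_nonneg _) habsμ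
    have := hE i
    rw [hInt]
    linarith
  refine ⟨key, fun hopt i => ?_⟩
  obtain ⟨hbp, hbm⟩ := hfeas i
  have hbpμ : ((bp (T i)) Set.univ).toReal ≤ (ν Set.univ).toReal :=
    ENNReal.toReal_mono (measure_ne_top ν _) (hbp Set.univ)
  have hbmμ : ((bm (T i)) Set.univ).toReal ≤ (μ Set.univ).toReal :=
    ENNReal.toReal_mono (measure_ne_top μ _) (hbm Set.univ)
  have hbnn : 0 ≤ (((bp (T i)) Set.univ).toReal + ((bm (T i)) Set.univ).toReal) / 2 := by
    positivity
  have hpow : ((((bp (T i)) Set.univ).toReal + ((bm (T i)) Set.univ).toReal) / 2) ^ (1 - α)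
      ≤ (((μ Set.univ).toReal + (ν Set.univ).toReal) / 2) ^ (1 - α) := by
    apply Real.rpow_le_rpow hbnn _ (by linarith)
    linarith
  calc Mtot (T i)
      ≤ ((((bp (T i)) Set.univ).toReal + ((bm (T i)) Set.univ).toReal) / 2) ^ (1 - α) * Mα (T i) :=
        hLemma _ (hopt i)
    _ ≤ (((μ Set.univ).toReal + (ν Set.univ).toReal) / 2) ^ (1 - α) *
          ∫ x, |h x| ∂((ν.toSignedMeasure - μ.toSignedMeasure).totalVariation) := by
        apply mul_le_mul hpow (key i) (hMα_nonneg _)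
        positivity
end
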